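/- Let t ∈ ℝ. Let L(t) be the 1×3 quaternionic matrix (i, j, t·k) and M(t) the symmetric 3×3 quaternionic matrix with zero diagonal and off-diagonal entries M₁₂ = M₂₁ = t·k, M₁₃ = M₃₁ = j, M₂₃ = M₃₂ = i. For x ∈ ℍ let Δ_x be the 4×3 quaternionic matrix with first row L(t) and remaining block M(t) − x·Id₃. Then for every x ∈ ℍ and every t ∈ ℝ, every entry of the 3×3 matrix Δ_x†·Δ_x is real (i.e. lies in ℝ·1 ⊆ ℍ). -/

import Mathlib

open Quaternion Matrix

/-- The `(N+1) × N` quaternionic ADHM operator `Δ_x` built from a `1 × N` row `L`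
and an `N × N` matrix `M`: its first row is `L` and its remaining block is
`M − x·Id_N`. -/
noncomputable def adhmDelta (N : ℕ) (L : Matrix (Fin 1) (Fin N) ℍ[ℝ])
    (M : Matrix (Fin N) (Fin N) ℍ[ℝ]) (x : ℍ[ℝ]) : Matrix (Fin (N + 1)) (Fin N) ℍ[ℝ] :=
  Matrix.of fun i j =>
    Fin.cases (L 0 j) (fun i' => ((M - Matrix.diagonal fun _ => x : Matrix (Fin N) (Fin N) ℍ[ℝ]) i' j)) i

/-- `L(t) = (i, j, t·k)`, the row of the `D_{2d}`-symmetric charge-3 ADHM family. -/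
noncomputable def Ltet (t : ℝ) : Matrix (Fin 1) (Fin 3) ℍ[ℝ] :=
  !![(⟨0, 1, 0, 0⟩ : ℍ[ℝ]), (⟨0, 0, 1, 0⟩ : ℍ[ℝ]), (⟨0, 0, 0, t⟩ : ℍ[ℝ])]

/-- `M(t)`, the symmetric matrix of the `D_{2d}`-symmetric charge-3 ADHM family:
zero diagonal, `M₁₂ = t·k`, `M₁₃ = j`, `M₂₃ = i`. -/
noncomputable def Mtet (t : ℝ) : Matrix (Fin 3) (Fin 3) ℍ[ℝ] :=
  !![(0 : ℍ[ℝ]), (⟨0, 0, 0, t⟩ : ℍ[ℝ]), (⟨0, 0, 1, 0⟩ : ℍ[ℝ]);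
     (⟨0, 0, 0, t⟩ : ℍ[ℝ]), (0 : ℍ[ℝ]), (⟨0, 1, 0, 0⟩ : ℍ[ℝ]);
     (⟨0, 0, 1, 0⟩ : ℍ[ℝ]), (⟨0, 1, 0, 0⟩ : ℍ[ℝ]), (0 : ℍ[ℝ])]

/-!
The `x`-independent part `L†L + M†M` of `Δ_x†Δ_x` is `(t² + 2)·Id₃`. Since `M(t)` is
skew-Hermitian, the rest is `|x|²·Id₃` plus the matrix with entries `M_ab x − x̄ M_ab`, and for
pure imaginary `p` the quaternion `p x − x̄ p = p·Im x + Im x·p` is real.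
-/

namespace Quaternion

/-- An anonymous-constructor literal `⟨a, b, c, d⟩ : ℍ[R]` elaborates at type `ℍ[R,-1,0,-1]`, on
which the `Quaternion` simp lemmas do not fire; `ofComponents` is the same term at type `ℍ[R]`. -/
def ofComponents {R : Type*} [Zero R] [One R] [Neg R] (a b c d : R) : ℍ[R] := ⟨a, b, c, d⟩

section ofComponents

variable {R : Type*} [Zero R] [One R] [Neg R] (a b c d : R)

@[simp] theorem re_ofComponents : (ofComponents a b c d).re = a := rfl
@[simp] theorem imI_ofComponents : (ofComponents a b c d).imI = b := rfl
@[simp] theorem imJ_ofComponents : (ofComponents a b c d).imJ = c := rfl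
@[simp] theorem imK_ofComponents : (ofComponents a b c d).imK = d := rfl

end ofComponents

variable {R : Type*} [CommRing R]

theorem exists_eq_coe_of_im_eq_zero {q : ℍ[R]} (h : q.im = 0) : ∃ r : R, q = r :=
  ⟨q.re, by rw [← sub_im_self, h, sub_zero]⟩

theorem im_mul_sub_star_mul_eq_zero {p : ℍ[R]} (hp : p.re = 0) (x : ℍ[R]) :
    (p * x - star x * p).im = 0 := by
  ext <;> simp [hp] <;> ring

end Quaternion

namespace Matrix

variable {n α : Type*} [Fintype n] [DecidableEq n] [Ring α] [StarRing α]

theorem conjTranspose_sub_scalar_mul_self {M : Matrix n n α} (hM : Mᴴ = -M) (x : α) :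
    (M - diagonal fun _ => x)ᴴ * (M - diagonal fun _ => x) =
      Mᴴ * M + (M * diagonal (fun _ => x) - diagonal (fun _ => star x) * M) +
        diagonal fun _ => star x * x := by
  rw [conjTranspose_sub, diagonal_conjTranspose, hM, sub_mul, mul_sub, mul_sub,
    diagonal_mul_diagonal]
  simp only [Pi.star_def, neg_mul]
  abel

end Matrix

theorem conjTranspose_adhmDelta_mul_self (N : ℕ) (L : Matrix (Fin 1) (Fin N) ℍ[ℝ])
    (M : Matrix (Fin N) (Fin N) ℍ[ℝ]) (x : ℍ[ℝ]) :
    (adhmDelta N L M x)ᴴ * adhmDelta N L M x =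
      Lᴴ * L + (M - diagonal fun _ => x)ᴴ * (M - diagonal fun _ => x) := by
  ext a b : 1
  simp only [mul_apply, Fin.sum_univ_succ, Fin.sum_univ_zero, add_zero, Matrix.add_apply,
    Matrix.conjTranspose_apply, adhmDelta, of_apply, Fin.cases_zero, Fin.cases_succ]

theorem Ltet_eq (t : ℝ) :
    Ltet t = !![ofComponents 0 1 0 0, ofComponents 0 0 1 0, ofComponents 0 0 0 t] :=
  rfl

theorem Mtet_eq (t : ℝ) :
    Mtet t = !![0, ofComponents 0 0 0 t, ofComponents 0 0 1 0;
      ofComponents 0 0 0 t, 0, ofComponents 0 1 0 0;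
      ofComponents 0 0 1 0, ofComponents 0 1 0 0, 0] :=
  rfl

theorem Mtet_conjTranspose (t : ℝ) : (Mtet t)ᴴ = -Mtet t := by
  ext a b : 1
  fin_cases a <;> fin_cases b <;> ext <;> simp [Mtet_eq]

theorem re_Mtet_apply (t : ℝ) (a b : Fin 3) : (Mtet t a b).re = 0 := by
  fin_cases a <;> fin_cases b <;> simp [Mtet_eq]

theorem Ltet_conjTranspose_mul_self_add_Mtet (t : ℝ) :
    (Ltet t)ᴴ * Ltet t + (Mtet t)ᴴ * Mtet t = diagonal fun _ => ((t ^ 2 + 2 : ℝ) : ℍ[ℝ]) := by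
  ext a b : 1
  fin_cases a <;> fin_cases b <;> ext <;>
    simp [Ltet_eq, Mtet_eq, mul_apply, Fin.sum_univ_succ, sq] <;> ring

/-- for every real `t` and every `x ∈ ℍ`, each entry of the `3 × 3`
matrix `Δ_x†·Δ_x` built from the `D_{2d}`-symmetric charge-3 ADHM data
`(L(t), M(t))` is real, i.e. lies in `ℝ·1 ⊆ ℍ`. -/
theorem adhm_tetrahedral_family_real (t : ℝ) (x : ℍ[ℝ]) :
    ∀ a b, ∃ r : ℝ,
      ((adhmDelta 3 (Ltet t) (Mtet t) x)ᴴ * adhmDelta 3 (Ltet t) (Mtet t) x) a b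
        = (r : ℍ[ℝ]) := by
  intro a b
  apply exists_eq_coe_of_im_eq_zero
  rw [conjTranspose_adhmDelta_mul_self, conjTranspose_sub_scalar_mul_self (Mtet_conjTranspose t),
    ← add_assoc, ← add_assoc, Ltet_conjTranspose_mul_self_add_Mtet, star_mul_self]
  simp only [Matrix.add_apply, Matrix.sub_apply, mul_diagonal, diagonal_mul, Quaternion.im_add,
    im_mul_sub_star_mul_eq_zero (re_Mtet_apply t a b)]
  rw [diagonal_apply, diagonal_apply]
  split_ifs <;> simp only [im_coe, im_zero, add_zero]
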